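/- arXiv:1711.06973 — 9 statements merged into one kernel-verified Lean document; each statement's English description precedes it below -/
import Mathlib

section
/- Let H be a real Hilbert space, C a nonempty subset of H, and T : C → H any mapping. Then the set of attractive points A(T) is a convex subset of H. -/
open scoped RealInnerProductSpace

section

variable {E : Type*} [NormedAddCommGroup E] [InnerProductSpace ℝ E]

/-- The `‖z‖²` terms cancel when both distances are squared. -/
theorem setOf_norm_sub_le_norm_sub_eq (u v : E) :
    {z : E | ‖u - z‖ ≤ ‖v - z‖} = {z : E | 2 * ⟪v - u, z⟫ ≤ ‖v‖ ^ 2 - ‖u‖ ^ 2} := by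
  ext z
  simp only [Set.mem_ofPred_eq]
  rw [← pow_le_pow_iff_left₀ (norm_nonneg _) (norm_nonneg _) two_ne_zero,
    norm_sub_sq_real, norm_sub_sq_real, inner_sub_left]
  constructor <;> intro h <;> linarith

theorem convex_setOf_norm_sub_le_norm_sub (u v : E) : Convex ℝ {z : E | ‖u - z‖ ≤ ‖v - z‖} := by
  rw [setOf_norm_sub_le_norm_sub_eq]
  exact convex_halfSpace_le ((2 : ℝ) • innerₛₗ ℝ (v - u)).isLinear _

end

theorem attractive_points_convex_general
    {H : Type*} [NormedAddCommGroup H] [InnerProductSpace ℝ H]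
    (C : Set H) (T : H → H) :
    Convex ℝ {z : H | ∀ x ∈ C, ‖T x - z‖ ≤ ‖x - z‖} := by
  simpa only [Set.ofPred_forall] using
    convex_iInter₂ fun x (_ : x ∈ C) => convex_setOf_norm_sub_le_norm_sub (T x) x

theorem attractive_points_convex
    {H : Type*} [NormedAddCommGroup H] [InnerProductSpace ℝ H] [CompleteSpace H]
    (C : Set H) (hC : C.Nonempty) (T : H → H) :
    Convex ℝ {z : H | ∀ x ∈ C, ‖T x - z‖ ≤ ‖x - z‖} :=
  attractive_points_convex_general C T
end

section
/- Let H be a real Hilbert space, C a nonempty closed convex subset of H, and T : C → C a mapping. If A(T) is nonempty then the fixed point set F(T) is nonempty; in fact, if z ∈ A(T), then the metric projection of z onto C is a fixed point of T. -/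
theorem fixed_point_from_attractive_point
    {H : Type*} [NormedAddCommGroup H] [InnerProductSpace ℝ H] [CompleteSpace H]
    (C : Set H) (hC : C.Nonempty) (hCl : IsClosed C) (hCv : Convex ℝ C)
    (T : H → H) (hT : ∀ x ∈ C, T x ∈ C)
    (z : H) (hz : ∀ x ∈ C, ‖T x - z‖ ≤ ‖x - z‖)
    (p : H) (hpC : p ∈ C) (hproj : ∀ y ∈ C, ‖z - p‖ ≤ ‖z - y‖) :
    T p = p ∧ ∃ x ∈ C, T x = x := by
  set q := T p with hqdef
  have hqC : q ∈ C := hT p hpC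
  have h1 : ‖q - z‖ ≤ ‖p - z‖ := hz p hpC
  have h2 : ‖z - p‖ ≤ ‖z - q‖ := hproj q hqC
  rw [norm_sub_rev z p, norm_sub_rev z q] at h2
  have heq : ‖q - z‖ = ‖p - z‖ := le_antisymm h1 h2
  -- midpoint
  have hmC : ((1:ℝ)/2) • p + ((1:ℝ)/2) • q ∈ C := hCv hpC hqC (by norm_num) (by norm_num) (by norm_num)
  have h3 : ‖z - p‖ ≤ ‖z - (((1:ℝ)/2) • p + ((1:ℝ)/2) • q)‖ := hproj _ hmC
  have hpar : ‖(z - p) + (z - q)‖ ^ 2 + ‖(z - p) - (z - q)‖ ^ 2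
      = 2 * ‖z - p‖ ^ 2 + 2 * ‖z - q‖ ^ 2 := by
    have := parallelogram_law_with_norm ℝ (z - p) (z - q)
    nlinarith [this]
  have hsum : (z - p) + (z - q) = (2:ℝ) • (z - (((1:ℝ)/2) • p + ((1:ℝ)/2) • q)) := by
    rw [smul_sub, smul_add, smul_smul, smul_smul]
    norm_num
    module
  have hdiff : (z - p) - (z - q) = q - p := by abel
  rw [hsum, hdiff, norm_smul] at hpar
  have hnn : ‖z - p‖ ≤ ‖z - q‖ := by rw [norm_sub_rev z p, norm_sub_rev z q, heq]
  have hqp : ‖q - p‖ = 0 := by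
    have hzq : ‖z - q‖ = ‖z - p‖ := by rw [norm_sub_rev z q, norm_sub_rev z p, heq]
    simp only [Real.norm_ofNat] at hpar
    nlinarith [norm_nonneg (q - p), norm_nonneg (z - p),
      norm_nonneg (z - (((1:ℝ)/2) • p + ((1:ℝ)/2) • q))]
  have hfix : q = p := by
    exact sub_eq_zero.mp (norm_eq_zero.mp hqp)
  exact ⟨hfix, p, hpC, hfix⟩
end

section
/- Let H be a real Hilbert space, C a nonempty closed convex subset of H, and S, T : C → C two mappings. If CAP(S,T) is nonempty, then F(S) ∩ F(T) is nonempty; moreover, for any z ∈ CAP(S,T), the metric projection P_C z is a common fixed point of S and T. -/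
private lemma para_key {H : Type*} [NormedAddCommGroup H] [InnerProductSpace ℝ H]
    (a b : H) (hab : ‖b‖ ≤ ‖a‖) (h : 2 * ‖a‖ ≤ ‖a + b‖) : a = b := by
  have hpar := parallelogram_law_with_norm ℝ a b
  have h1 : (2 * ‖a‖)^2 ≤ ‖a + b‖^2 := by
    apply sq_le_sq' <;> nlinarith [norm_nonneg a, norm_nonneg (a+b)]
  have h2 : ‖a - b‖^2 ≤ 0 := by nlinarith [norm_nonneg b]
  have : ‖a - b‖ = 0 := by nlinarith [norm_nonneg (a - b)]
  have := norm_sub_eq_zero_iff.mp this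
  exact this

private lemma fix_of_proj {H : Type*} [NormedAddCommGroup H] [InnerProductSpace ℝ H]
    (C : Set H) (hCv : Convex ℝ C) (z p q : H) (hpC : p ∈ C) (hqC : q ∈ C)
    (hle : ‖q - z‖ ≤ ‖p - z‖) (hproj : ∀ y ∈ C, ‖z - p‖ ≤ ‖z - y‖) : q = p := by
  have hm : (1/2 : ℝ) • p + (1/2 : ℝ) • q ∈ C :=
    hCv hpC hqC (by norm_num) (by norm_num) (by norm_num)
  have hmid := hproj _ hm
  have key : (z - p) = (z - q) := by
    apply para_key
    · rw [norm_sub_rev z q, norm_sub_rev z p]; exact hle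
    · have : (z - p) + (z - q) = (2 : ℝ) • (z - ((1/2 : ℝ) • p + (1/2 : ℝ) • q)) := by
        module
      rw [this, norm_smul]
      simp only [Real.norm_ofNat]
      linarith [mul_le_mul_of_nonneg_left hmid (by norm_num : (0:ℝ) ≤ 2)]
  exact (sub_right_injective key).symm

theorem common_fixed_point_from_CAP
    {H : Type*} [NormedAddCommGroup H] [InnerProductSpace ℝ H] [CompleteSpace H]
    (C : Set H) (hC : C.Nonempty) (hCl : IsClosed C) (hCv : Convex ℝ C)
    (S T : H → H) (hS : ∀ x ∈ C, S x ∈ C) (hT : ∀ x ∈ C, T x ∈ C)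
    (z : H) (hz : ∀ x ∈ C, ‖S x - z‖ ≤ ‖x - z‖ ∧ ‖T x - z‖ ≤ ‖x - z‖)
    (p : H) (hpC : p ∈ C) (hproj : ∀ y ∈ C, ‖z - p‖ ≤ ‖z - y‖) :
    (S p = p ∧ T p = p) ∧ ∃ x ∈ C, S x = x ∧ T x = x := by
  have hSp : S p = p :=
    fix_of_proj C hCv z p (S p) hpC (hS p hpC) (hz p hpC).1 hproj
  have hTp : T p = p :=
    fix_of_proj C hCv z p (T p) hpC (hT p hpC) (hz p hpC).2 hproj
  exact ⟨⟨hSp, hTp⟩, p, hpC, hSp, hTp⟩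
end

section
/- Let H be a real Hilbert space and T : C → C a further generalized hybrid mapping; i.e., there exist reals α, β, γ, δ, ε with α‖Tx − Ty‖² + β‖x − Ty‖² + γ‖Tx − y‖² + δ‖x − y‖² + ε‖x − Tx‖² ≤ 0 for all x, y ∈ C, satisfying α + β + γ + δ ≥ 0, ε ≥ 0, and α + β > 0. If T has a fixed point p ∈ C, then T is quasi-nonexpansive: ‖Tx − p‖ ≤ ‖x − p‖ for all x ∈ C. -/
theorem fgh_with_fixed_point_is_quasi_nonexpansive
    {H : Type*} [NormedAddCommGroup H] [InnerProductSpace ℝ H] [CompleteSpace H]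
    (C : Set H) (hC : C.Nonempty) (T : H → H) (hT : ∀ x ∈ C, T x ∈ C)
    (α β γ δ ε : ℝ)
    (hsum : α + β + γ + δ ≥ 0) (hε : ε ≥ 0) (hαβ : α + β > 0)
    (hfgh : ∀ x ∈ C, ∀ y ∈ C,
      α * ‖T x - T y‖ ^ 2 + β * ‖x - T y‖ ^ 2 + γ * ‖T x - y‖ ^ 2
        + δ * ‖x - y‖ ^ 2 + ε * ‖x - T x‖ ^ 2 ≤ 0)
    (p : H) (hpC : p ∈ C) (hp : T p = p) :
    ∀ x ∈ C, ‖T x - p‖ ≤ ‖x - p‖ := by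
  intro x hx
  have h := hfgh p hpC x hx
  rw [hp] at h
  simp only [sub_self, norm_zero] at h
  have h1 : (α + β) * ‖p - T x‖ ^ 2 ≤ (α + β) * ‖p - x‖ ^ 2 := by nlinarith [sq_nonneg ‖p - x‖]
  have h2 : ‖p - T x‖ ^ 2 ≤ ‖p - x‖ ^ 2 := le_of_mul_le_mul_left h1 hαβ
  rw [← norm_neg (p - T x), ← norm_neg (p - x), neg_sub, neg_sub] at h2
  exact (pow_le_pow_iff_left₀ (norm_nonneg _) (norm_nonneg _) two_ne_zero).mp h2
end

section
/- Let H be a real Hilbert space, C a nonempty convex subset, S, T : C → C with CAP(S,T) nonempty, and {xₙ} the two-mapping Picard–Mann iteration xₙ₊₁ = S((1 − αₙ)xₙ + αₙ T xₙ) with αₙ ∈ (0,1) and lim inf αₙ(1 − αₙ) > 0. Then ‖T xₙ − xₙ‖ → 0 as n → ∞. -/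
open Filter

lemma combo_norm_sq_aux {H : Type*} [NormedAddCommGroup H] [InnerProductSpace ℝ H]
    (a b : H) (t : ℝ) :
    ‖(1 - t) • a + t • b‖^2
      = (1 - t) * ‖a‖^2 + t * ‖b‖^2 - t * (1 - t) * ‖a - b‖^2 := by
  rw [norm_add_sq_real, norm_sub_sq_real, norm_smul, norm_smul,
    real_inner_smul_left, real_inner_smul_right]
  simp only [Real.norm_eq_abs, mul_pow, sq_abs]
  ring

lemma combo_norm_sq' {H : Type*} [NormedAddCommGroup H] [InnerProductSpace ℝ H]
    (u v z : H) (t : ℝ) :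
    ‖(1 - t) • u + t • v - z‖^2
      = (1 - t) * ‖u - z‖^2 + t * ‖v - z‖^2 - t * (1 - t) * ‖u - v‖^2 := by
  have h1 : (1 - t) • u + t • v - z = (1 - t) • (u - z) + t • (v - z) := by
    rw [smul_sub, smul_sub, sub_smul, sub_smul, one_smul, one_smul]; abel
  have h2 : u - v = (u - z) - (v - z) := by abel
  rw [h1, h2, combo_norm_sq_aux]

theorem picard_mann_asymptotic_regularity
    {H : Type*} [NormedAddCommGroup H] [InnerProductSpace ℝ H] [CompleteSpace H]
    (C : Set H) (hC : C.Nonempty) (hCv : Convex ℝ C)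
    (S T : H → H) (hS : ∀ x ∈ C, S x ∈ C) (hT : ∀ x ∈ C, T x ∈ C)
    (hCAP : ∃ z : H, ∀ x ∈ C, ‖S x - z‖ ≤ ‖x - z‖ ∧ ‖T x - z‖ ≤ ‖x - z‖)
    (α : ℕ → ℝ) (hα : ∀ n, α n ∈ Set.Ioo (0 : ℝ) 1)
    (hliminf : 0 < Filter.liminf (fun n => α n * (1 - α n)) atTop)
    (x : ℕ → H) (hx0 : x 0 ∈ C)
    (hrec : ∀ n, x (n + 1) = S ((1 - α n) • x n + α n • T (x n))) :
    Tendsto (fun n => ‖T (x n) - x n‖) atTop (nhds 0) := by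
  obtain ⟨z, hz⟩ := hCAP
  have hmem : ∀ n, x n ∈ C := by
    intro n
    induction n with
    | zero => exact hx0
    | succ n ih =>
      rw [hrec]
      exact hS _ (hCv ih (hT _ ih) (by linarith [(hα n).2]) (le_of_lt (hα n).1)
        (by ring))
  set d : ℕ → ℝ := fun n => ‖x n - z‖^2 with hd
  have key : ∀ n, α n * (1 - α n) * ‖T (x n) - x n‖^2 + d (n+1) ≤ d n := by
    intro n
    have hyC : (1 - α n) • x n + α n • T (x n) ∈ C :=
      hCv (hmem n) (hT _ (hmem n)) (by linarith [(hα n).2]) (le_of_lt (hα n).1)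
        (by ring)
    have hS2 : ‖S ((1 - α n) • x n + α n • T (x n)) - z‖^2
        ≤ ‖(1 - α n) • x n + α n • T (x n) - z‖^2 :=
      pow_le_pow_left₀ (norm_nonneg _) (hz _ hyC).1 2
    have hT2 : ‖T (x n) - z‖^2 ≤ ‖x n - z‖^2 :=
      pow_le_pow_left₀ (norm_nonneg _) (hz _ (hmem n)).2 2
    have hid := combo_norm_sq' (x n) (T (x n)) z (α n)
    have hrev : ‖x n - T (x n)‖ = ‖T (x n) - x n‖ := norm_sub_rev _ _
    have hx1 : d (n+1) = ‖S ((1 - α n) • x n + α n • T (x n)) - z‖^2 := by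
      simp [hd, hrec n]
    have h3 : 0 ≤ α n * (‖x n - z‖^2 - ‖T (x n) - z‖^2) :=
      mul_nonneg (le_of_lt (hα n).1) (by linarith)
    rw [hx1, ← hrev]
    simp only [hd]
    linarith
  have hnonneg : ∀ n, 0 ≤ α n * (1 - α n) * ‖T (x n) - x n‖^2 := fun n =>
    mul_nonneg (mul_nonneg (le_of_lt (hα n).1) (by linarith [(hα n).2]))
      (sq_nonneg _)
  have hanti : Antitone d := antitone_nat_of_succ_le fun n => by
    linarith [key n, hnonneg n]
  have hbdd : BddBelow (Set.range d) := ⟨0, by rintro _ ⟨n, rfl⟩; positivity⟩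
  have hdlim : Tendsto d atTop (nhds (⨅ n, d n)) := tendsto_atTop_ciInf hanti hbdd
  have hdlim' : Tendsto (fun n => d (n+1)) atTop (nhds (⨅ n, d n)) :=
    hdlim.comp (tendsto_add_atTop_nat 1)
  have hdiff : Tendsto (fun n => d n - d (n+1)) atTop (nhds 0) := by
    have := hdlim.sub hdlim'
    simpa using this
  set c := liminf (fun n => α n * (1 - α n)) atTop with hc
  have hcb : IsBoundedUnder (· ≥ ·) atTop (fun n => α n * (1 - α n)) :=
    isBoundedUnder_of ⟨0, fun n =>
      mul_nonneg (le_of_lt (hα n).1) (by linarith [(hα n).2])⟩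
  have hev : ∀ᶠ n in atTop, c / 2 < α n * (1 - α n) :=
    eventually_lt_of_lt_liminf (by linarith) hcb
  have hsq : Tendsto (fun n => ‖T (x n) - x n‖^2) atTop (nhds 0) := by
    apply squeeze_zero' (Eventually.of_forall fun n => sq_nonneg _)
      (g := fun n => (d n - d (n+1)) / (c / 2))
    · filter_upwards [hev] with n hn
      rw [le_div_iff₀ (by linarith)]
      nlinarith [key n, sq_nonneg (‖T (x n) - x n‖)]
    · simpa using hdiff.div_const (c / 2)
  have := hsq.sqrt
  simpa [Real.sqrt_sq (norm_nonneg _)] using this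
end

section
/- Fejér-monotone projection convergence: let K be a nonempty closed convex subset of a real Hilbert space H, P_K : H → K the metric projection, and {xₙ} ⊆ H a sequence such that ‖xₙ₊₁ − k‖ ≤ ‖xₙ − k‖ for every k ∈ K and every n. Then {P_K xₙ} converges strongly to some point k₀ ∈ K. -/
open Filter

theorem fejer_monotone_projection_converges
    {H : Type*} [NormedAddCommGroup H] [InnerProductSpace ℝ H] [CompleteSpace H]
    (K : Set H) (hK : K.Nonempty) (hKc : IsClosed K) (hKv : Convex ℝ K)
    (P : H → H) (hP : ∀ u : H, P u ∈ K ∧ ∀ y ∈ K, ‖u - P u‖ ≤ ‖u - y‖)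
    (x : ℕ → H) (hfej : ∀ k ∈ K, ∀ n : ℕ, ‖x (n + 1) - k‖ ≤ ‖x n - k‖) :
    ∃ k₀ ∈ K, Tendsto (fun n => P (x n)) atTop (nhds k₀) := by
  have hPK : ∀ u, P u ∈ K := fun u => (hP u).1
  have hmono : ∀ k ∈ K, ∀ n m : ℕ, n ≤ m → ‖x m - k‖ ≤ ‖x n - k‖ := by
    intro k hk n m hnm
    induction m, hnm using Nat.le_induction with
    | base => exact le_refl _
    | succ m hm ih => exact le_trans (hfej k hk m) ih
  set d : ℕ → ℝ := fun n => ‖x n - P (x n)‖ with hd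
  have hdnn : ∀ n, 0 ≤ d n := fun n => norm_nonneg _
  have hdanti : ∀ n m : ℕ, n ≤ m → d m ≤ d n := by
    intro n m hnm
    calc d m ≤ ‖x m - P (x n)‖ := (hP (x m)).2 _ (hPK (x n))
      _ ≤ ‖x n - P (x n)‖ := hmono _ (hPK (x n)) n m hnm
  have hanti2 : Antitone (fun n => d n ^ 2) := by
    intro n m h
    have h1 := hdanti n m h
    have h2 := hdnn m
    simp only
    nlinarith
  have hbd : BddBelow (Set.range fun n => d n ^ 2) := by
    refine ⟨0, ?_⟩
    rintro y ⟨n, rfl⟩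
    positivity
  have hconv : Tendsto (fun n => d n ^ 2) atTop (nhds (⨅ n, d n ^ 2)) :=
    tendsto_atTop_ciInf hanti2 hbd
  have hcauchy2 : CauchySeq (fun n => d n ^ 2) := hconv.cauchySeq
  -- key inequality
  have key : ∀ n m : ℕ, n ≤ m → ‖P (x m) - P (x n)‖ ^ 2 ≤ 2 * (d n ^ 2 - d m ^ 2) := by
    intro n m hnm
    set a := x m - P (x n) with ha
    set b := x m - P (x m) with hb
    set z := (1/2 : ℝ) • P (x n) + (1/2 : ℝ) • P (x m) with hz
    have hzK : z ∈ K := hKv (hPK (x n)) (hPK (x m)) (by norm_num) (by norm_num) (by norm_num)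
    have hab : a + b = (2 : ℝ) • (x m - z) := by
      rw [ha, hb, hz]; module
    have habn : ‖a + b‖ = 2 * ‖x m - z‖ := by
      rw [hab, norm_smul]; simp
    have hsubn : ‖a - b‖ = ‖P (x m) - P (x n)‖ := by
      have : a - b = P (x m) - P (x n) := by rw [ha, hb]; abel
      rw [this]
    have hpar := parallelogram_law_with_norm ℝ a b
    have hA : ‖a‖ ≤ d n := hmono _ (hPK (x n)) n m hnm
    have hB : ‖b‖ = d m := rfl
    have hZ : d m ≤ ‖x m - z‖ := (hP (x m)).2 z hzK
    have hna : 0 ≤ ‖a‖ := norm_nonneg _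
    have hnz : 0 ≤ ‖x m - z‖ := norm_nonneg _
    have hdm : 0 ≤ d m := hdnn m
    have h1 : ‖a - b‖ * ‖a - b‖ = ‖P (x m) - P (x n)‖ ^ 2 := by rw [hsubn]; ring
    have h2 : ‖a‖ * ‖a‖ ≤ d n ^ 2 := by nlinarith [hdnn n]
    have h3 : ‖b‖ * ‖b‖ = d m ^ 2 := by rw [hB]; ring
    have h4 : ‖a + b‖ * ‖a + b‖ = 4 * (‖x m - z‖ * ‖x m - z‖) := by rw [habn]; ring
    have h5 : d m ^ 2 ≤ ‖x m - z‖ * ‖x m - z‖ := by nlinarith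
    linarith
  have hcauchy : CauchySeq (fun n => P (x n)) := by
    rw [Metric.cauchySeq_iff] at hcauchy2 ⊢
    intro ε hε
    obtain ⟨N, hN⟩ := hcauchy2 (ε ^ 2 / 2) (by positivity)
    refine ⟨N, fun m hm n hn => ?_⟩
    rcases le_total n m with h | h
    · have hk := key n m h
      have hd2 := hN m hm n hn
      rw [Real.dist_eq] at hd2
      have habs : d n ^ 2 - d m ^ 2 < ε ^ 2 / 2 := by
        cases abs_lt.mp hd2 with
        | intro h1 h2 => linarith
      have hlt : ‖P (x m) - P (x n)‖ ^ 2 < ε ^ 2 := by linarith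
      have := lt_of_pow_lt_pow_left₀ 2 (le_of_lt hε) hlt
      calc dist (P (x m)) (P (x n)) = ‖P (x m) - P (x n)‖ := dist_eq_norm _ _
        _ < ε := this
    · have hk := key m n h
      have hd2 := hN n hn m hm
      rw [Real.dist_eq] at hd2
      have habs : d m ^ 2 - d n ^ 2 < ε ^ 2 / 2 := by
        cases abs_lt.mp hd2 with
        | intro h1 h2 => linarith
      have hlt : ‖P (x n) - P (x m)‖ ^ 2 < ε ^ 2 := by linarith
      have := lt_of_pow_lt_pow_left₀ 2 (le_of_lt hε) hlt
      calc dist (P (x m)) (P (x n)) = ‖P (x n) - P (x m)‖ := by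
              rw [dist_eq_norm, ← norm_neg]; congr 1; abel
        _ < ε := this
  obtain ⟨k₀, hk₀⟩ := cauchySeq_tendsto_of_complete hcauchy
  exact ⟨k₀, hKc.mem_of_tendsto hk₀ (Eventually.of_forall fun n => hPK _), hk₀⟩
end

section
/- Variational characterization consequence: let H be a real Hilbert space, K ⊆ H nonempty closed convex, P_K the metric projection. Suppose {xₙ} ⊆ H is Fejér monotone with respect to K (‖xₙ₊₁ − k‖ ≤ ‖xₙ − k‖ for all k ∈ K), xₙ converges weakly to q ∈ K, and P_K xₙ → p strongly. Then q = p. -/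
/-! The projections satisfy `⟪xₙ - P xₙ, q - P xₙ⟫ ≤ 0`. The sequence `xₙ - P xₙ` converges weakly
to `q - p` and is bounded by `‖x₀ - q‖` (minimality of `P` and Fejér monotonicity at `q ∈ K`), while
`q - P xₙ → q - p` strongly, so the inner products converge to `‖q - p‖²`, which is therefore `≤ 0`. -/

open Filter Topology RealInnerProductSpace

section
variable {H : Type*} [NormedAddCommGroup H] [InnerProductSpace ℝ H]

theorem real_inner_sub_nonpos_of_forall_norm_sub_le {K : Set H} (hK : Convex ℝ K) {u v w : H}
    (hv : v ∈ K) (hmin : ∀ y ∈ K, ‖u - v‖ ≤ ‖u - y‖) (hw : w ∈ K) :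
    ⟪u - v, w - v⟫ ≤ 0 := by
  have : Nonempty K := ⟨⟨v, hv⟩⟩
  have hbdd : BddBelow (Set.range fun y : K => ‖u - y‖) :=
    ⟨0, by rintro _ ⟨y, rfl⟩; exact norm_nonneg _⟩
  have hinf : ‖u - v‖ = ⨅ y : K, ‖u - y‖ :=
    le_antisymm (le_ciInf fun y => hmin y y.2) (ciInf_le hbdd ⟨v, hv⟩)
  exact (norm_eq_iInf_iff_real_inner_le_zero hK hv).1 hinf w hw

theorem tendsto_inner_of_weak_of_tendsto {ι : Type*} {l : Filter ι} {a b : ι → H} {a₀ b₀ : H}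
    {C : ℝ} (ha : ∀ v, Tendsto (fun i => ⟪a i, v⟫) l (𝓝 ⟪a₀, v⟫)) (hC : ∀ i, ‖a i‖ ≤ C)
    (hb : Tendsto b l (𝓝 b₀)) :
    Tendsto (fun i => ⟪a i, b i⟫) l (𝓝 ⟪a₀, b₀⟫) := by
  have hdiff : Tendsto (fun i => ⟪a i, b i - b₀⟫) l (𝓝 0) := by
    have hbound : Tendsto (fun i => C * ‖b i - b₀‖) l (𝓝 0) := by
      simpa using (tendsto_iff_norm_sub_tendsto_zero.1 hb).const_mul C
    refine squeeze_zero_norm (fun i => ?_) hbound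
    calc ‖⟪a i, b i - b₀⟫‖ ≤ ‖a i‖ * ‖b i - b₀‖ := norm_inner_le_norm _ _
      _ ≤ C * ‖b i - b₀‖ := by gcongr; exact hC i
  simpa [inner_sub_right] using (ha b₀).add hdiff

end

theorem fejer_weak_limit_eq_projection_limit_general
    {H : Type*} [NormedAddCommGroup H] [InnerProductSpace ℝ H]
    (K : Set H) (hKv : Convex ℝ K)
    (P : H → H) (hP : ∀ u : H, P u ∈ K ∧ ∀ y ∈ K, ‖u - P u‖ ≤ ‖u - y‖)
    (x : ℕ → H) (hfej : ∀ k ∈ K, ∀ n : ℕ, ‖x (n + 1) - k‖ ≤ ‖x n - k‖)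
    (q : H) (hqK : q ∈ K)
    (hweak : ∀ v : H, Tendsto (fun n => ⟪x n, v⟫) atTop (nhds ⟪q, v⟫))
    (p : H) (hp : Tendsto (fun n => P (x n)) atTop (nhds p)) :
    q = p := by
  have hvar : ∀ n, ⟪x n - P (x n), q - P (x n)⟫ ≤ 0 := fun n =>
    real_inner_sub_nonpos_of_forall_norm_sub_le hKv (hP (x n)).1 (hP (x n)).2 hqK
  have hweak' : ∀ v, Tendsto (fun n => ⟪x n - P (x n), v⟫) atTop (𝓝 ⟪q - p, v⟫) := fun v => by
    simpa only [inner_sub_left] using (hweak v).sub (hp.inner tendsto_const_nhds)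
  have hbound : ∀ n, ‖x n - P (x n)‖ ≤ ‖x 0 - q‖ := fun n =>
    ((hP (x n)).2 q hqK).trans
      (antitone_nat_of_succ_le (f := fun n => ‖x n - q‖) (hfej q hqK) (Nat.zero_le n))
  have hlim := tendsto_inner_of_weak_of_tendsto hweak' hbound ((tendsto_const_nhds (x := q)).sub hp)
  have hnonpos : ⟪q - p, q - p⟫ ≤ 0 := le_of_tendsto' hlim hvar
  exact sub_eq_zero.1 (real_inner_self_nonpos.1 hnonpos)

theorem fejer_weak_limit_eq_projection_limit
    {H : Type*} [NormedAddCommGroup H] [InnerProductSpace ℝ H] [CompleteSpace H]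
    (K : Set H) (hK : K.Nonempty) (hKc : IsClosed K) (hKv : Convex ℝ K)
    (P : H → H) (hP : ∀ u : H, P u ∈ K ∧ ∀ y ∈ K, ‖u - P u‖ ≤ ‖u - y‖)
    (x : ℕ → H) (hfej : ∀ k ∈ K, ∀ n : ℕ, ‖x (n + 1) - k‖ ≤ ‖x n - k‖)
    (q : H) (hqK : q ∈ K)
    (hweak : ∀ v : H, Tendsto (fun n => ⟪x n, v⟫) atTop (nhds ⟪q, v⟫))
    (p : H) (hp : Tendsto (fun n => P (x n)) atTop (nhds p)) :
    q = p :=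
  fejer_weak_limit_eq_projection_limit_general K hKv P hP x hfej q hqK hweak p hp
end

section
/- Demiclosedness-type principle for further generalized hybrid mappings: let H be a real Hilbert space, C ⊆ H nonempty, and T : C → C satisfy α‖Tx − Ty‖² + β‖x − Ty‖² + γ‖Tx − y‖² + δ‖x − y‖² + ε‖x − Tx‖² ≤ 0 for all x, y ∈ C, with α + β + γ + δ ≥ 0, ε ≥ 0, α + β > 0. If {xₙ} ⊆ C is bounded, ‖T xₙ − xₙ‖ → 0, and xₙ converges weakly to q, then ‖q − Ty‖ ≤ ‖q − y‖ for all y ∈ C, i.e., q ∈ A(T). -/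
open Filter RealInnerProductSpace

private lemma diff_sq_tendsto_aux {H : Type*} [NormedAddCommGroup H] [InnerProductSpace ℝ H]
    (a b : ℕ → H) (M : ℝ) (hb : ∀ n, ‖b n‖ ≤ M)
    (h : Tendsto (fun n => ‖a n - b n‖) atTop (nhds 0)) :
    Tendsto (fun n => ‖a n‖ ^ 2 - ‖b n‖ ^ 2) atTop (nhds 0) := by
  have hid : ∀ n, ‖a n‖ ^ 2 - ‖b n‖ ^ 2 = ⟪a n - b n, a n + b n⟫ := by
    intro n
    rw [inner_sub_left, inner_add_right, inner_add_right,
      real_inner_self_eq_norm_sq, real_inner_self_eq_norm_sq, real_inner_comm (b n) (a n)]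
    ring
  have hbound : ∀ n, ‖‖a n‖ ^ 2 - ‖b n‖ ^ 2‖ ≤ ‖a n - b n‖ * (‖a n - b n‖ + 2 * M) := by
    intro n
    rw [hid n, Real.norm_eq_abs]
    calc |⟪a n - b n, a n + b n⟫| ≤ ‖a n - b n‖ * ‖a n + b n‖ := abs_real_inner_le_norm _ _
      _ ≤ ‖a n - b n‖ * (‖a n - b n‖ + 2 * M) := by
          apply mul_le_mul_of_nonneg_left _ (norm_nonneg _)
          calc ‖a n + b n‖ = ‖(a n - b n) + (2 : ℝ) • b n‖ := by
                congr 1; rw [two_smul]; abel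
            _ ≤ ‖a n - b n‖ + ‖(2 : ℝ) • b n‖ := norm_add_le _ _
            _ ≤ ‖a n - b n‖ + 2 * M := by
                refine add_le_add le_rfl ?_
                rw [norm_smul]
                simp only [Real.norm_ofNat]
                exact mul_le_mul_of_nonneg_left (hb n) (by norm_num)
  have hg : Tendsto (fun n => ‖a n - b n‖ * (‖a n - b n‖ + 2 * M)) atTop (nhds 0) := by
    have := h.mul (h.add (tendsto_const_nhds (x := 2 * M)))
    simpa using this
  exact squeeze_zero_norm hbound hg

theorem fgh_demiclosedness
    {H : Type*} [NormedAddCommGroup H] [InnerProductSpace ℝ H] [CompleteSpace H]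
    (C : Set H) (hC : C.Nonempty) (T : H → H) (hT : ∀ x ∈ C, T x ∈ C)
    (α β γ δ ε : ℝ)
    (hsum : α + β + γ + δ ≥ 0) (hε : ε ≥ 0) (hαβ : α + β > 0)
    (hfgh : ∀ x ∈ C, ∀ y ∈ C,
      α * ‖T x - T y‖ ^ 2 + β * ‖x - T y‖ ^ 2 + γ * ‖T x - y‖ ^ 2
        + δ * ‖x - y‖ ^ 2 + ε * ‖x - T x‖ ^ 2 ≤ 0)
    (x : ℕ → H) (hxC : ∀ n, x n ∈ C)
    (hbdd : Bornology.IsBounded (Set.range x))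
    (hreg : Tendsto (fun n => ‖T (x n) - x n‖) atTop (nhds 0))
    (q : H) (hweak : ∀ v : H, Tendsto (fun n => ⟪x n, v⟫) atTop (nhds ⟪q, v⟫)) :
    ∀ y ∈ C, ‖T y - q‖ ≤ ‖y - q‖ := by
  intro y hy
  obtain ⟨M, hM⟩ := (isBounded_iff_forall_norm_le).1 hbdd
  have hMx : ∀ n, ‖x n‖ ≤ M := fun n => hM _ (Set.mem_range_self n)
  have hM0 : 0 ≤ M := le_trans (norm_nonneg _) (hMx 0)
  set v := y - T y with hv
  -- weak convergence of inner products with v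
  have hg : Tendsto (fun n => ⟪x n - y, v⟫) atTop (nhds ⟪q - y, v⟫) := by
    have h1 := hweak v
    have : (fun n => ⟪x n - y, v⟫) = fun n => ⟪x n, v⟫ - ⟪y, v⟫ := by
      funext n; rw [inner_sub_left]
    rw [this, inner_sub_left]
    exact h1.sub tendsto_const_nhds
  -- key difference lemmas
  have hdiff : ∀ z : H, Tendsto (fun n => ‖T (x n) - z‖ ^ 2 - ‖x n - z‖ ^ 2) atTop (nhds 0) := by
    intro z
    apply diff_sq_tendsto_aux (fun n => T (x n) - z) (fun n => x n - z) (M + ‖z‖)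
    · intro n
      calc ‖x n - z‖ ≤ ‖x n‖ + ‖z‖ := norm_sub_le _ _
        _ ≤ M + ‖z‖ := add_le_add (hMx n) le_rfl
    · simpa using hreg
  -- Bolzano–Weierstrass on ‖x n - y‖²
  have hfmem : ∀ n, ‖x n - y‖ ^ 2 ∈ Set.Icc (0 : ℝ) ((M + ‖y‖) ^ 2) := by
    intro n
    constructor
    · positivity
    · have h1 : ‖x n - y‖ ≤ M + ‖y‖ := by
        calc ‖x n - y‖ ≤ ‖x n‖ + ‖y‖ := norm_sub_le _ _
          _ ≤ M + ‖y‖ := add_le_add (hMx n) le_rfl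
      exact pow_le_pow_left₀ (norm_nonneg _) h1 2
  obtain ⟨L, hLmem, φ, hφmono, hLf⟩ :=
    tendsto_subseq_of_bounded (Metric.isBounded_Icc (0 : ℝ) ((M + ‖y‖) ^ 2)) hfmem
  have hL0 : 0 ≤ L := by
    rw [IsClosed.closure_eq isClosed_Icc] at hLmem
    exact hLmem.1
  set c : ℝ := ‖v‖ ^ 2 + 2 * ⟪q - y, v⟫ with hc
  have hφtop : Tendsto φ atTop atTop := hφmono.tendsto_atTop
  -- t2 : ‖x (φ n) - T y‖² → L + c
  have hidTy : ∀ n, ‖x n - T y‖ ^ 2 = ‖x n - y‖ ^ 2 + 2 * ⟪x n - y, v⟫ + ‖v‖ ^ 2 := by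
    intro n
    have : x n - T y = (x n - y) + v := by rw [hv]; abel
    rw [this, @norm_add_sq_real]
  have t2 : Tendsto (fun n => ‖x (φ n) - T y‖ ^ 2) atTop (nhds (L + c)) := by
    have h1 : Tendsto (fun n => ‖x (φ n) - y‖ ^ 2 + 2 * ⟪x (φ n) - y, v⟫ + ‖v‖ ^ 2)
        atTop (nhds (L + 2 * ⟪q - y, v⟫ + ‖v‖ ^ 2)) :=
      (hLf.add ((hg.comp hφtop).const_mul 2)).add tendsto_const_nhds
    have heq : (fun n => ‖x (φ n) - T y‖ ^ 2)
        = fun n => ‖x (φ n) - y‖ ^ 2 + 2 * ⟪x (φ n) - y, v⟫ + ‖v‖ ^ 2 := by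
      funext n; exact hidTy (φ n)
    rw [heq, hc]
    convert h1 using 2
    ring
  -- t1 : ‖T (x (φ n)) - T y‖² → L + c
  have t1 : Tendsto (fun n => ‖T (x (φ n)) - T y‖ ^ 2) atTop (nhds (L + c)) := by
    have := ((hdiff (T y)).comp hφtop).add t2
    simpa using this
  -- t3 : ‖T (x (φ n)) - y‖² → L
  have t3 : Tendsto (fun n => ‖T (x (φ n)) - y‖ ^ 2) atTop (nhds L) := by
    have := ((hdiff y).comp hφtop).add hLf
    simpa using this
  -- t5 : ‖x (φ n) - T (x (φ n))‖² → 0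
  have t5 : Tendsto (fun n => ‖x (φ n) - T (x (φ n))‖ ^ 2) atTop (nhds 0) := by
    have h1 : Tendsto (fun n => ‖T (x n) - x n‖ * ‖T (x n) - x n‖) atTop (nhds 0) := by
      simpa using hreg.mul hreg
    have h2 := h1.comp hφtop
    have heq : (fun n => ‖x (φ n) - T (x (φ n))‖ ^ 2)
        = (fun n => ‖T (x n) - x n‖ * ‖T (x n) - x n‖) ∘ φ := by
      funext n
      simp [Function.comp, norm_sub_rev, sq]
    rw [heq]; exact h2
  -- pass to the limit in the hybrid inequality
  have hlim : Tendsto (fun n =>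
      α * ‖T (x (φ n)) - T y‖ ^ 2 + β * ‖x (φ n) - T y‖ ^ 2 + γ * ‖T (x (φ n)) - y‖ ^ 2
        + δ * ‖x (φ n) - y‖ ^ 2 + ε * ‖x (φ n) - T (x (φ n))‖ ^ 2) atTop
      (nhds (α * (L + c) + β * (L + c) + γ * L + δ * L + ε * 0)) :=
    ((((t1.const_mul α).add (t2.const_mul β)).add (t3.const_mul γ)).add
      (hLf.const_mul δ)).add (t5.const_mul ε)
  have hle : α * (L + c) + β * (L + c) + γ * L + δ * L + ε * 0 ≤ 0 :=
    le_of_tendsto hlim (Eventually.of_forall fun n => hfgh (x (φ n)) (hxC _) y hy)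
  have hcle : c ≤ 0 := by nlinarith [mul_nonneg hsum hL0]
  -- conclude
  have hfinal : ‖T y - q‖ ^ 2 ≤ ‖y - q‖ ^ 2 := by
    have hid : T y - q = (y - q) + (T y - y) := by abel
    have h2 : ‖T y - q‖ ^ 2 = ‖y - q‖ ^ 2 + 2 * ⟪y - q, T y - y⟫ + ‖T y - y‖ ^ 2 := by
      rw [hid, @norm_add_sq_real]
    have h3 : ⟪y - q, T y - y⟫ = ⟪q - y, v⟫ := by
      rw [hv, ← inner_neg_neg]; congr 1 <;> abel
    have h4 : ‖T y - y‖ = ‖v‖ := by rw [hv, norm_sub_rev]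
    rw [h2, h3, h4]
    have : ‖v‖ ^ 2 + 2 * ⟪q - y, v⟫ ≤ 0 := hcle
    linarith
  nlinarith [norm_nonneg (T y - q), norm_nonneg (y - q)]
end

section
/- Existence of attractive points from bounded orbits (mean convergence version): let H be a real Hilbert space, C ⊆ H nonempty, and T : C → C a further generalized hybrid mapping (constants α, β, γ, δ, ε with α + β + γ + δ ≥ 0, ε ≥ 0 and α + β > 0 or α + γ > 0). If there exists z ∈ C whose orbit {Tⁿz : n ≥ 0} is bounded, then A(T) is nonempty. Conversely, if A(T) is nonempty, then every orbit {Tⁿz : n ≥ 0}, z ∈ C, is bounded. -/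
/-!
Write `S n` for the Cesàro means of the orbit `Tⁿ z`. Expanding the hybrid inequality at
`(Tᵏ z, x)` around `x` and summing over `k < n`, the bounded terms telescope and
`α + β + γ + δ ≥ 0` absorbs the rest, leaving
`(α + β) (2 ⟪S n - x, x - T x⟫ + ‖x - T x‖²) = O(1 / n)`.
A weak cluster point `p` of the bounded sequence `S n` therefore satisfies
`2 ⟪p - x, x - T x⟫ + ‖x - T x‖² ≤ 0`, which is `‖T x - p‖ ≤ ‖x - p‖`. Weak cluster points are
replaced by a point in every closed convex set that eventually contains `S n`; it exists because
nested bounded closed convex sets in a Hilbert space meet. The case `α + γ > 0` is the case `α + β > 0` with `x` and `y` swapped, and the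
converse holds because an attractive point `p` keeps every orbit in a ball around `p`.
-/

open Filter Set Topology Finset Bornology
open scoped RealInnerProductSpace

section Metric

variable {X : Type*} [PseudoMetricSpace X]

theorem isBounded_range_iterate_of_dist_le {C : Set X} {T : X → X} (hT : MapsTo T C C) {p : X}
    (hp : ∀ x ∈ C, dist (T x) p ≤ dist x p) {z : X} (hz : z ∈ C) :
    IsBounded (range fun n : ℕ => T^[n] z) := by
  refine (Metric.isBounded_closedBall (x := p) (r := dist z p)).subset (range_subset_iff.2 ?_)
  intro n
  induction n with
  | zero => simp
  | succ n ih =>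
    rw [Metric.mem_closedBall, Function.iterate_succ_apply']
    exact (hp _ (hT.iterate n hz)).trans ih

end Metric

section Normed

variable {H : Type*} [NormedAddCommGroup H]

def HybridIneq (C : Set H) (T : H → H) (α β γ δ : ℝ) : Prop :=
  ∀ x ∈ C, ∀ y ∈ C,
    α * ‖T x - T y‖ ^ 2 + β * ‖x - T y‖ ^ 2 + γ * ‖T x - y‖ ^ 2 + δ * ‖x - y‖ ^ 2 ≤ 0

theorem HybridIneq.swap {C : Set H} {T : H → H} {α β γ δ : ℝ} (h : HybridIneq C T α β γ δ) :
    HybridIneq C T α γ β δ := fun x hx y hy => by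
  have := h y hy x hx
  rw [norm_sub_rev (T y), norm_sub_rev y, norm_sub_rev (T y) x, norm_sub_rev y x] at this
  linarith

variable [InnerProductSpace ℝ H]

theorem norm_sub_sq_le_of_le_norm_midpoint {x y : H} {r : ℝ} (hr : 0 ≤ r)
    (h : r ≤ ‖(2 : ℝ)⁻¹ • (x + y)‖) :
    ‖x - y‖ ^ 2 ≤ 2 * ‖x‖ ^ 2 + 2 * ‖y‖ ^ 2 - 4 * r ^ 2 := by
  have hmid : ‖x + y‖ = 2 * ‖(2 : ℝ)⁻¹ • (x + y)‖ := by rw [norm_smul]; norm_num; ring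
  have hpar := parallelogram_law_with_norm ℝ x y
  nlinarith

theorem nonempty_iInter_of_antitone_isClosed_convex [CompleteSpace H] {K : ℕ → Set H}
    (hK : Antitone K) (hne : ∀ n, (K n).Nonempty) (hcl : ∀ n, IsClosed (K n))
    (hcv : ∀ n, Convex ℝ (K n)) (hbd : IsBounded (K 0)) : (⋂ n, K n).Nonempty := by
  -- `q n` is the point of least norm in `K n`; these norms increase, and the parallelogram law
  -- turns their convergence into the Cauchy property of `q`.
  choose q hqK hq using fun n =>
    exists_norm_eq_iInf_of_complete_convex (hne n) (hcl n).isComplete (hcv n) 0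
  have hmin : ∀ n, ∀ w ∈ K n, ‖q n‖ ≤ ‖w‖ := fun n w hw => by
    have := ciInf_le (f := fun w : K n => ‖(0 : H) - w‖)
      ⟨0, forall_mem_range.2 fun _ => norm_nonneg _⟩ ⟨w, hw⟩
    rwa [← hq n, zero_sub, zero_sub, norm_neg, norm_neg] at this
  obtain ⟨R, hR⟩ := isBounded_iff_forall_norm_le.1 hbd
  have hmono : Monotone fun n => ‖q n‖ :=
    monotone_nat_of_le_succ fun n => hmin n _ (hK n.le_succ (hqK _))
  have hbdd : BddAbove (range fun n => ‖q n‖) :=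
    ⟨R, forall_mem_range.2 fun n => hR _ (hK (Nat.zero_le n) (hqK n))⟩
  set D := ⨆ n, ‖q n‖
  have hD : Tendsto (fun n => ‖q n‖) atTop (𝓝 D) := tendsto_atTop_ciSup hmono hbdd
  have hdist : ∀ N n m, N ≤ n → N ≤ m → dist (q n) (q m) ≤ √(4 * (D ^ 2 - ‖q N‖ ^ 2)) := by
    intro N n m hn hm
    have hmid := hmin N _ (hcv N (hK hn (hqK n)) (hK hm (hqK m)) (by norm_num) (by norm_num)
      (by norm_num : (2 : ℝ)⁻¹ + 2⁻¹ = 1))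
    rw [← smul_add] at hmid
    have h := norm_sub_sq_le_of_le_norm_midpoint (norm_nonneg _) hmid
    have hnD := le_ciSup hbdd n
    have hmD := le_ciSup hbdd m
    refine Real.le_sqrt_of_sq_le ?_
    rw [dist_eq_norm]
    nlinarith [norm_nonneg (q n), norm_nonneg (q m)]
  have hlim : Tendsto (fun N => √(4 * (D ^ 2 - ‖q N‖ ^ 2))) atTop (𝓝 0) := by
    have := ((hD.pow 2).const_sub (D ^ 2)).const_mul 4 |>.sqrt
    rwa [sub_self, mul_zero, Real.sqrt_zero] at this
  obtain ⟨p, hp⟩ := cauchySeq_tendsto_of_complete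
    (cauchySeq_of_le_tendsto_0 _ (fun n m N => hdist N n m) hlim)
  refine ⟨p, mem_iInter.2 fun n => (hcl n).mem_of_tendsto hp ?_⟩
  filter_upwards [eventually_ge_atTop n] with m hm using hK hm (hqK m)

theorem exists_forall_mem_of_eventually_mem [CompleteSpace H] {u : ℕ → H}
    (hu : IsBounded (range u)) :
    ∃ p : H, ∀ Q : Set H, IsClosed Q → Convex ℝ Q → (∀ᶠ n in atTop, u n ∈ Q) → p ∈ Q := by
  set K : ℕ → Set H := fun n => closure (convexHull ℝ (u '' Ici n))
  have hK : Antitone K := fun n m h =>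
    closure_mono (convexHull_mono (image_mono (Ici_subset_Ici.2 h)))
  have hbd : IsBounded (K 0) :=
    (isBounded_convexHull.2 (hu.subset (image_subset_range _ _))).closure
  obtain ⟨p, hp⟩ := nonempty_iInter_of_antitone_isClosed_convex hK
    (fun n => ⟨u n, subset_closure (subset_convexHull ℝ _ ⟨n, self_mem_Ici, rfl⟩)⟩)
    (fun _ => isClosed_closure) (fun _ => (convex_convexHull ℝ _).closure) hbd
  refine ⟨p, fun Q hQ hQc hev => ?_⟩
  obtain ⟨N, hN⟩ := eventually_atTop.1 hev
  refine closure_minimal (convexHull_min ?_ hQc) hQ (mem_iInter.1 hp N)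
  rintro _ ⟨n, hn, rfl⟩
  exact hN n hn

theorem exists_forall_inner_le_of_tendsto [CompleteSpace H] {u : ℕ → H}
    (hu : IsBounded (range u)) :
    ∃ p : H, ∀ (c : H) (f : ℕ → ℝ) (r : ℝ), Tendsto f atTop (𝓝 r) →
      (∀ᶠ n in atTop, ⟪u n, c⟫ ≤ f n) → ⟪p, c⟫ ≤ r := by
  obtain ⟨p, hp⟩ := exists_forall_mem_of_eventually_mem hu
  refine ⟨p, fun c f r hf hle => le_of_forall_pos_le_add fun η hη => ?_⟩
  have hlin : IsLinearMap ℝ fun y : H => ⟪y, c⟫ :=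
    ⟨fun _ _ => inner_add_left _ _ _, fun _ _ => real_inner_smul_left _ _ _⟩
  refine hp {y | ⟪y, c⟫ ≤ r + η} (isClosed_le (by fun_prop) continuous_const)
    (convex_halfSpace_le hlin _) ?_
  filter_upwards [hle, hf.eventually (gt_mem_nhds (lt_add_of_pos_right r hη))] with n h1 h2
  exact h1.trans h2.le

noncomputable def cesaroMean (v : ℕ → H) (n : ℕ) : H :=
  (n : ℝ)⁻¹ • ∑ k ∈ range n, v k

theorem sum_inner_sub_eq_mul_inner_cesaroMean (v : ℕ → H) (x c : H) (n : ℕ) :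
    ∑ k ∈ range n, ⟪v k - x, c⟫ = n * ⟪cesaroMean v n - x, c⟫ := by
  rcases n.eq_zero_or_pos with rfl | hn
  · simp
  have hn' : (n : ℝ) ≠ 0 := by positivity
  rw [← real_inner_smul_left, smul_sub, cesaroMean, smul_inv_smul₀ hn', ← sum_inner,
    sum_sub_distrib, sum_const, card_range, Nat.cast_smul_eq_nsmul]

theorem isBounded_range_cesaroMean {v : ℕ → H} (hv : IsBounded (range v)) :
    IsBounded (range (cesaroMean v)) := by
  obtain ⟨M, hM⟩ := isBounded_iff_forall_norm_le.1 hv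
  have hM' : ∀ k, ‖v k‖ ≤ M := fun k => hM _ ⟨k, rfl⟩
  refine isBounded_iff_forall_norm_le.2 ⟨M, forall_mem_range.2 fun n => ?_⟩
  rcases n.eq_zero_or_pos with rfl | hn
  · simpa [cesaroMean] using (norm_nonneg _).trans (hM' 0)
  calc ‖cesaroMean v n‖ = (n : ℝ)⁻¹ * ‖∑ k ∈ range n, v k‖ := by
        simp [cesaroMean, norm_smul]
    _ ≤ (n : ℝ)⁻¹ * (n * M) := by
        gcongr
        simpa using norm_sum_le_of_le (range n) fun k _ => hM' k
    _ = M := by field_simp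

theorem norm_sub_le_norm_sub_of_two_inner_add_le {x y p : H}
    (h : 2 * ⟪p - x, x - y⟫ + ‖x - y‖ ^ 2 ≤ 0) : ‖y - p‖ ≤ ‖x - p‖ := by
  have hexp : ‖y - p‖ ^ 2 = ‖x - p‖ ^ 2 + (2 * ⟪p - x, x - y⟫ + ‖x - y‖ ^ 2) := by
    rw [show y - p = (x - p) - (x - y) by abel, norm_sub_sq_real, ← neg_sub x p, inner_neg_left]
    ring
  exact (sq_le_sq₀ (norm_nonneg _) (norm_nonneg _)).1 (by linarith)

namespace HybridIneq

variable {C : Set H} {T : H → H} {α β γ δ : ℝ}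

theorem mul_two_inner_add_le_sub (h : HybridIneq C T α β γ δ) (hsum : 0 ≤ α + β + γ + δ) {x w : H}
    (hx : x ∈ C) (hw : w ∈ C) :
    (α + β) * (2 * ⟪w - x, x - T x⟫ + ‖x - T x‖ ^ 2) ≤
      ((α + γ) * ‖w - x‖ ^ 2 + 2 * α * ⟪w - x, x - T x⟫) -
        ((α + γ) * ‖T w - x‖ ^ 2 + 2 * α * ⟪T w - x, x - T x⟫) := by
  have hwx := h w hw x hx
  rw [show T w - T x = (T w - x) + (x - T x) by abel, show w - T x = (w - x) + (x - T x) by abel,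
    norm_add_sq_real, norm_add_sq_real] at hwx
  nlinarith [mul_nonneg hsum (sq_nonneg ‖w - x‖)]

theorem exists_two_inner_cesaroMean_add_le (hT : MapsTo T C C) (h : HybridIneq C T α β γ δ)
    (hsum : 0 ≤ α + β + γ + δ) (hab : 0 < α + β) {z : H} (hz : z ∈ C)
    (hbd : IsBounded (range fun n : ℕ => T^[n] z)) {x : H} (hx : x ∈ C) :
    ∃ B : ℝ, ∀ n : ℕ, 0 < n →
      2 * ⟪cesaroMean (fun k => T^[k] z) n - x, x - T x⟫ + ‖x - T x‖ ^ 2 ≤ B / n := by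
  obtain ⟨M, hM⟩ := isBounded_iff_forall_norm_le.1 hbd
  obtain ⟨R, hR⟩ : ∃ R, ∀ n, ‖T^[n] z - x‖ ≤ R :=
    ⟨M + ‖x‖, fun n => (norm_sub_le _ _).trans (by gcongr; exact hM _ ⟨n, rfl⟩)⟩
  set a := x - T x
  set Φ : H → ℝ := fun w => (α + γ) * ‖w - x‖ ^ 2 + 2 * α * ⟪w - x, a⟫
  have hΦ : ∀ n, |Φ (T^[n] z)| ≤ |α + γ| * R ^ 2 + 2 * |α| * (R * ‖a‖) := fun n => by
    have hn := hR n
    calc |Φ (T^[n] z)|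
        ≤ |α + γ| * ‖T^[n] z - x‖ ^ 2 + 2 * |α| * |⟪T^[n] z - x, a⟫| := by
          refine (abs_add_le _ _).trans_eq ?_
          simp only [abs_mul, abs_pow, abs_norm, abs_two]
      _ ≤ _ := by
          gcongr
          exact (abs_real_inner_le_norm _ _).trans (by gcongr)
  have htel : ∀ n : ℕ, (α + β) * (n * (2 * ⟪cesaroMean (fun k => T^[k] z) n - x, a⟫ + ‖a‖ ^ 2))
      ≤ Φ z - Φ (T^[n] z) := fun n =>
    calc _ = ∑ k ∈ range n, (α + β) * (2 * ⟪T^[k] z - x, a⟫ + ‖a‖ ^ 2) := by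
          rw [← mul_sum, sum_add_distrib, ← mul_sum, sum_inner_sub_eq_mul_inner_cesaroMean,
            sum_const, card_range, nsmul_eq_mul]
          ring
      _ ≤ ∑ k ∈ range n, (Φ (T^[k] z) - Φ (T^[k + 1] z)) := sum_le_sum fun k _ => by
          rw [Function.iterate_succ_apply']
          exact h.mul_two_inner_add_le_sub hsum hx (hT.iterate k hz)
      _ = Φ z - Φ (T^[n] z) := sum_range_sub' (fun k => Φ (T^[k] z)) n
  refine ⟨2 * (|α + γ| * R ^ 2 + 2 * |α| * (R * ‖a‖)) / (α + β), fun n hn => ?_⟩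
  rw [div_div, le_div_iff₀ (by positivity)]
  have hΦ0 := hΦ 0
  rw [Function.iterate_zero_apply] at hΦ0
  nlinarith [htel n, abs_le.1 hΦ0, abs_le.1 (hΦ n)]

theorem exists_attractive_point [CompleteSpace H] (hT : MapsTo T C C)
    (h : HybridIneq C T α β γ δ) (hsum : 0 ≤ α + β + γ + δ) (hab : 0 < α + β) {z : H}
    (hz : z ∈ C) (hbd : IsBounded (range fun n : ℕ => T^[n] z)) :
    ∃ p : H, ∀ x ∈ C, ‖T x - p‖ ≤ ‖x - p‖ := by
  obtain ⟨p, hp⟩ := exists_forall_inner_le_of_tendsto (isBounded_range_cesaroMean hbd)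
  refine ⟨p, fun x hx => norm_sub_le_norm_sub_of_two_inner_add_le ?_⟩
  obtain ⟨B, hB⟩ := h.exists_two_inner_cesaroMean_add_le hT hsum hab hz hbd hx
  have hlim : Tendsto (fun n : ℕ => ⟪x, x - T x⟫ + (B / n - ‖x - T x‖ ^ 2) / 2) atTop
      (𝓝 (⟪x, x - T x⟫ + (0 - ‖x - T x‖ ^ 2) / 2)) :=
    (((tendsto_const_div_atTop_nhds_zero_nat B).sub_const _).div_const 2).const_add _
  have := hp (x - T x) _ _ hlim <| by
    filter_upwards [eventually_gt_atTop 0] with n hn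
    have := hB n hn
    rw [inner_sub_left] at this
    linarith
  rw [inner_sub_left]
  linarith

end HybridIneq

end Normed

theorem fgh_attractive_point_iff_bounded_orbit_general
    {H : Type*} [NormedAddCommGroup H] [InnerProductSpace ℝ H] [CompleteSpace H]
    (C : Set H) (T : H → H) (hT : ∀ x ∈ C, T x ∈ C)
    (α β γ δ ε : ℝ)
    (hsum : α + β + γ + δ ≥ 0) (hε : ε ≥ 0) (hor : α + β > 0 ∨ α + γ > 0)
    (hfgh : ∀ x ∈ C, ∀ y ∈ C,
      α * ‖T x - T y‖ ^ 2 + β * ‖x - T y‖ ^ 2 + γ * ‖T x - y‖ ^ 2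
        + δ * ‖x - y‖ ^ 2 + ε * ‖x - T x‖ ^ 2 ≤ 0) :
    ((∃ z ∈ C, Bornology.IsBounded (Set.range fun n : ℕ => T^[n] z)) →
      ∃ p : H, ∀ x ∈ C, ‖T x - p‖ ≤ ‖x - p‖)
    ∧ ((∃ p : H, ∀ x ∈ C, ‖T x - p‖ ≤ ‖x - p‖) →
      ∀ z ∈ C, Bornology.IsBounded (Set.range fun n : ℕ => T^[n] z)) := by
  have hhyb : HybridIneq C T α β γ δ := fun x hx y hy => by
    linarith [hfgh x hx y hy, mul_nonneg hε (sq_nonneg ‖x - T x‖)]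
  refine ⟨fun ⟨z, hz, hbd⟩ => ?_, fun ⟨p, hp⟩ z hz => ?_⟩
  · rcases hor with hab | hag
    · exact hhyb.exists_attractive_point hT hsum hab hz hbd
    · exact hhyb.swap.exists_attractive_point hT (by linarith) hag hz hbd
  · exact isBounded_range_iterate_of_dist_le hT
      (fun x hx => by simpa only [dist_eq_norm] using hp x hx) hz

theorem fgh_attractive_point_iff_bounded_orbit
    {H : Type*} [NormedAddCommGroup H] [InnerProductSpace ℝ H] [CompleteSpace H]
    (C : Set H) (hC : C.Nonempty) (T : H → H) (hT : ∀ x ∈ C, T x ∈ C)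
    (α β γ δ ε : ℝ)
    (hsum : α + β + γ + δ ≥ 0) (hε : ε ≥ 0) (hor : α + β > 0 ∨ α + γ > 0)
    (hfgh : ∀ x ∈ C, ∀ y ∈ C,
      α * ‖T x - T y‖ ^ 2 + β * ‖x - T y‖ ^ 2 + γ * ‖T x - y‖ ^ 2
        + δ * ‖x - y‖ ^ 2 + ε * ‖x - T x‖ ^ 2 ≤ 0) :
    ((∃ z ∈ C, Bornology.IsBounded (Set.range fun n : ℕ => T^[n] z)) →
      ∃ p : H, ∀ x ∈ C, ‖T x - p‖ ≤ ‖x - p‖)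
    ∧ ((∃ p : H, ∀ x ∈ C, ‖T x - p‖ ≤ ‖x - p‖) →
      ∀ z ∈ C, Bornology.IsBounded (Set.range fun n : ℕ => T^[n] z)) :=
  fgh_attractive_point_iff_bounded_orbit_general C T hT α β γ δ ε hsum hε hor hfgh
end
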